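/- Let T be a division ring, a ∈ GL(n,T) with all diagonal entries nonzero, and ρ a permutation with a_{i,ρ(i)} ≠ 0 for all i. Then for a suitable choice of invertible diagonal matrix d, the matrix b = a·d·a satisfies b_{i,ρ²(i)} ≠ 0 for all i. -/

import Mathlib

/-!
Only the entries `(a d a) i (ρ² i) = ∑ k, a i k * d k * a k (ρ² i)` matter, and in each of them the
term `k = ρ i` has nonzero coefficients on both sides of `d (ρ i)`. Changing a single diagonal
entry `d p` shifts each of these entries by `a i p * (Δ d p) * a p (ρ² i)`, so it makes the entry
vanish for at most one new value of `d p` if the coefficients are nonzero, and does not change it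
otherwise. Since `T` is infinite, the diagonal entries can be adjusted one index at a time, never
destroying an entry that was already nonzero.
-/

open Matrix Function

section

variable {ι T : Type*} [Fintype ι] [DecidableEq ι] [DivisionRing T]

lemma mul_single_mul_apply (a : Matrix ι ι T) (p : ι) (c : T) (i j : ι) :
    (a * single p p c * a) i j = a i p * c * a p j := by
  rw [Matrix.mul_assoc, mul_apply, Finset.sum_eq_single p (fun k _ hk => by simp [hk])
    (by simp), single_mul_apply_same, mul_assoc]

lemma mul_diagonal_update_mul_apply (a : Matrix ι ι T) (t : ι → T) (p : ι) (v : T) (i j : ι) :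
    (a * diagonal (update t p v) * a) i j =
      (a * diagonal t * a) i j + a i p * (v - t p) * a p j := by
  have hdiag : diagonal (update t p v) = diagonal t + single p p (v - t p) := by
    rw [← diagonal_single, diagonal_add]
    congr 1
    ext k
    rcases eq_or_ne k p with rfl | hk <;> simp [*]
  rw [hdiag, Matrix.mul_add, Matrix.add_mul, Matrix.add_apply, mul_single_mul_apply]

lemma subsingleton_setOf_mul_diagonal_update_mul_apply_eq_zero (a : Matrix ι ι T) (t : ι → T)
    {p i j : ι} (hip : a i p ≠ 0) (hpj : a p j ≠ 0) :
    {v | (a * diagonal (update t p v) * a) i j = 0}.Subsingleton := by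
  intro v hv w hw
  simp only [Set.mem_ofPred_eq, mul_diagonal_update_mul_apply] at hv hw
  simpa using mul_left_cancel₀ hip (mul_right_cancel₀ hpj (add_left_cancel (hv.trans hw.symm)))

lemma exists_update_mul_diagonal_mul_apply_ne_zero [Infinite T] (a : Matrix ι ι T) (σ : ι → ι)
    (t : ι → T) (p : ι) :
    ∃ v ≠ 0, ∀ i, ((a * diagonal t * a) i (σ i) ≠ 0 ∨ (a i p ≠ 0 ∧ a p (σ i) ≠ 0)) →
      (a * diagonal (update t p v) * a) i (σ i) ≠ 0 := by
  set bad : Set T := {0} ∪ ⋃ i ∈ {i | a i p ≠ 0 ∧ a p (σ i) ≠ 0},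
    {v | (a * diagonal (update t p v) * a) i (σ i) = 0}
  have hbad : bad.Finite :=
    (Set.finite_singleton 0).union <| Set.Finite.biUnion (Set.toFinite _) fun i hi =>
      (subsingleton_setOf_mul_diagonal_update_mul_apply_eq_zero a t hi.1 hi.2).finite
  obtain ⟨v, hv⟩ := hbad.infinite_compl.nonempty
  simp only [bad, Set.mem_compl_iff, Set.mem_union, Set.mem_singleton_iff, Set.mem_iUnion,
    Set.mem_ofPred_eq, not_or, not_exists] at hv
  refine ⟨v, hv.1, fun i hi => ?_⟩
  by_cases hcoef : a i p ≠ 0 ∧ a p (σ i) ≠ 0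
  · exact hv.2 i hcoef
  · have hzero : a i p * (v - t p) * a p (σ i) = 0 := by
      rcases not_and_or.mp hcoef with h | h <;> simp_all
    rw [mul_diagonal_update_mul_apply, hzero, add_zero]
    exact hi.resolve_right hcoef

theorem exists_ne_zero_mul_diagonal_mul_apply_ne_zero [Infinite T] (a : Matrix ι ι T)
    (σ : ι → ι) (h : ∀ i, ∃ p, a i p ≠ 0 ∧ a p (σ i) ≠ 0) :
    ∃ t : ι → T, (∀ k, t k ≠ 0) ∧ ∀ i, (a * diagonal t * a) i (σ i) ≠ 0 := by
  suffices ∀ s : Finset ι,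
      ∃ t : ι → T, (∀ k, t k ≠ 0) ∧ ∀ i ∈ s, (a * diagonal t * a) i (σ i) ≠ 0 by
    simpa using this Finset.univ
  intro s
  induction s using Finset.induction_on with
  | empty => exact ⟨1, fun _ => one_ne_zero, by simp⟩
  | insert i s _ ih =>
    obtain ⟨t, ht, hs⟩ := ih
    obtain ⟨p, hp⟩ := h i
    obtain ⟨v, hv, hupdate⟩ := exists_update_mul_diagonal_mul_apply_ne_zero a σ t p
    refine ⟨update t p v, fun k => ?_, fun j hj => ?_⟩
    · rcases eq_or_ne k p with rfl | hk <;> simp [*]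
    · rcases Finset.mem_insert.mp hj with rfl | hj
      · exact hupdate j (Or.inr hp)
      · exact hupdate j (Or.inl (hs j hj))

end

theorem exists_diag_perm_square_entries_ne_zero_general
    {n : ℕ} {T : Type*} [DivisionRing T] [Infinite T]
    (a : (Matrix (Fin n) (Fin n) T)ˣ)
    (ρ : Equiv.Perm (Fin n)) (hρ : ∀ i, a.val i (ρ i) ≠ 0) :
    ∃ d : (Matrix (Fin n) (Fin n) T)ˣ, (d.val).IsDiag ∧
      ∀ i, (a * d * a).val i (ρ (ρ i)) ≠ 0 := by
  obtain ⟨t, ht, hentry⟩ := exists_ne_zero_mul_diagonal_mul_apply_ne_zero a.val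
    (fun i => ρ (ρ i)) fun i => ⟨ρ i, hρ i, hρ (ρ i)⟩
  have hunit : IsUnit (diagonal t) :=
    (Pi.isUnit_iff.mpr fun k => (ht k).isUnit).map (diagonalRingHom (Fin n) T)
  refine ⟨hunit.unit, ?_, fun i => ?_⟩
  · rw [hunit.unit_spec]
    exact isDiag_diagonal t
  · rw [Units.val_mul, Units.val_mul, hunit.unit_spec]
    exact hentry i

theorem exists_diag_perm_square_entries_ne_zero
    {n : ℕ} {T : Type*} [DivisionRing T] [Infinite T] (hn : 2 ≤ n)
    (a : (Matrix (Fin n) (Fin n) T)ˣ) (hdiag : ∀ i, a.val i i ≠ 0)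
    (ρ : Equiv.Perm (Fin n)) (hρ : ∀ i, a.val i (ρ i) ≠ 0) :
    ∃ d : (Matrix (Fin n) (Fin n) T)ˣ, (d.val).IsDiag ∧
      ∀ i, (a * d * a).val i (ρ (ρ i)) ≠ 0 :=
  exists_diag_perm_square_entries_ne_zero_general a ρ hρ
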